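/- arXiv:1509.01301 — 5 statements merged into one kernel-verified Lean document; each statement's English description precedes it below -/
import Mathlib

section
/- If a partially oriented graph P has an excellent cyclic ordering O of its vertices, then the unoriented edges of P can be oriented so that O remains an excellent cyclic ordering of the resulting oriented graph. -/
/-!
Take a maximal oriented graph `D` with `A ⊆ D ⊆ A ∪ E` for which the ordering is still
excellent. If an edge `pq` were left unoriented, adding either `p → q` or `q → p` would create
a forbidden pair. A forbidden pair through `p → q` yields an arc of `D` dominating `pq` in whose
interval `q` precedes `p`; one through `q → p` yields an arc of `D` dominating `pq` in whose
interval `p` precedes `q`. These two arcs of `D` already form a forbidden pair.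
-/

/-- An oriented graph: an asymmetric (hence irreflexive) arc relation. -/
def IsOrientedGraph {V : Type*} (A : V → V → Prop) : Prop :=
  ∀ u v : V, A u v → ¬ A v u

/-- A tournament: an oriented graph with an arc between any two distinct vertices. -/
def IsTournament {V : Type*} (A : V → V → Prop) : Prop :=
  IsOrientedGraph A ∧ ∀ u v : V, u ≠ v → A u v ∨ A v u

/-- A local tournament: every out-neighbourhood and every in-neighbourhood
induces a tournament. -/
def IsLocalTournament {V : Type*} (A : V → V → Prop) : Prop :=
  IsOrientedGraph A ∧
  (∀ v x y : V, A v x → A v y → x ≠ y → A x y ∨ A y x) ∧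
  (∀ v x y : V, A x v → A y v → x ≠ y → A x y ∨ A y x)

/-- Local transitivity: the arc relation is transitive when restricted to the
out-neighbourhood of any vertex and to the in-neighbourhood of any vertex
(so these neighbourhoods induce transitive, i.e. triangle-free, subtournaments). -/
def IsLocallyTransitive {V : Type*} (A : V → V → Prop) : Prop :=
  (∀ v x y z : V, A v x → A v y → A v z → A x y → A y z → A x z) ∧
  (∀ v x y z : V, A x v → A y v → A z v → A x y → A y z → A x z)

/-- A directed cycle of `A` all of whose vertices lie in `S`. -/
def HasCycleIn {V : Type*} (A : V → V → Prop) (S : Set V) : Prop :=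
  ∃ (n : ℕ) (f : ZMod n → V), 2 ≤ n ∧ Function.Injective f ∧
    (∀ i, f i ∈ S) ∧ ∀ i : ZMod n, A (f i) (f (i + 1))

/-- A directed cycle somewhere in `A`. -/
def HasDirectedCycle {V : Type*} (A : V → V → Prop) : Prop :=
  HasCycleIn A Set.univ

/-- A partially oriented graph (pog): a symmetric loopless edge relation `E`
together with an asymmetric arc relation `A`, no pair of vertices being joined
by both an edge and an arc. -/
def IsPog {V : Type*} (E A : V → V → Prop) : Prop :=
  (∀ u v : V, E u v → E v u) ∧ (∀ v : V, ¬ E v v) ∧ IsOrientedGraph A ∧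
  (∀ u v : V, E u v → ¬ A u v ∧ ¬ A v u)

/-- `D` is a completion of the pog `(E, A)`: it keeps every arc of `A`,
orients every edge of `E` (in exactly one direction), and contains nothing else. -/
def IsCompletion {V : Type*} (E A D : V → V → Prop) : Prop :=
  IsOrientedGraph D ∧
  (∀ u v : V, A u v → D u v) ∧
  (∀ u v : V, E u v → D u v ∨ D v u) ∧
  (∀ u v : V, D u v → A u v ∨ E u v)

/-- `T` is obtained from the oriented graph `A` by adding arcs between
non-adjacent pairs only (no arc of `A` is reversed), the result being a
tournament.  This is exactly a completion of the partially oriented complete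
graph `A^c` to a tournament. -/
def CompletesToTournament {V : Type*} (A T : V → V → Prop) : Prop :=
  (∀ u v : V, A u v → T u v) ∧ (∀ u v : V, T u v → ¬ A v u) ∧ IsTournament T

/-- A round ordering of the arc relation `A`: a cyclic ordering (a bijection
from `ZMod n`) in which the out-neighbours of each vertex appear consecutively
immediately after it and its in-neighbours consecutively immediately before it. -/
def IsRoundOrdering {V : Type*} (A : V → V → Prop) {n : ℕ} (f : ZMod n → V) : Prop :=
  Function.Bijective f ∧
  (∀ i j : ZMod n, A (f i) (f j) ↔ 1 ≤ (j - i).val ∧ (j - i).val ≤ {u | A (f i) u}.ncard) ∧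
  (∀ i j : ZMod n, A (f j) (f i) ↔ 1 ≤ (i - j).val ∧ (i - j).val ≤ {u | A u (f i)}.ncard)

/-- The cyclic ordering given by `f : ZMod n → V` is excellent for the arc
relation `A`: there is no pair of arcs `(f i, f j)`, `(f s, f t)` whose vertices
occur in the cyclic order `f i, f t, f s, f j` (positions measured from `i`;
the degenerate cases `i = t` and `s = j` are allowed). -/
def IsExcellent {V : Type*} (A : V → V → Prop) {n : ℕ} (f : ZMod n → V) : Prop :=
  ¬ ∃ i j s t : ZMod n, A (f i) (f j) ∧ A (f s) (f t) ∧
      (t - i).val ≤ (s - i).val ∧ (s - i).val ≤ (j - i).val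

/- Positions are compared from a base point: `(b - a).val ≤ (c - a).val` says that `b` lies
on the cyclic interval from `a` to `c`. -/

namespace ZMod

variable {n : ℕ} [NeZero n]

theorem val_sub_eq_or (x y : ZMod n) :
    x.val ≤ y.val ∧ (y - x).val = y.val - x.val ∨
      y.val < x.val ∧ (y - x).val = y.val + n - x.val := by
  rcases le_or_gt x.val y.val with h | h
  · exact Or.inl ⟨h, val_sub h⟩
  · refine Or.inr ⟨h, ?_⟩
    have hsum : n ≤ (y - x).val + x.val := by
      by_contra! hlt
      have := val_add_of_lt hlt
      rw [sub_add_cancel] at this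
      omega
    have := val_add_val_of_le hsum
    rw [sub_add_cancel] at this
    omega

theorem val_sub_rotate {p q s t : ZMod n} (hst : s ≠ t)
    (h₁ : (t - p).val ≤ (s - p).val) (h₂ : (s - p).val ≤ (q - p).val) :
    (q - s).val ≤ (p - s).val ∧ (p - s).val ≤ (t - s).val := by
  have hst : s.val ≠ t.val := fun h => hst (val_injective n h)
  have := s.val_lt; have := t.val_lt; have := p.val_lt; have := q.val_lt
  have := val_sub_eq_or p t; have := val_sub_eq_or p s; have := val_sub_eq_or p q
  have := val_sub_eq_or s q; have := val_sub_eq_or s p; have := val_sub_eq_or s t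
  omega

theorem val_sub_crossing {p q s t s' t' : ZMod n} (hpq : p ≠ q)
    (h₁ : (q - s).val ≤ (p - s).val) (h₂ : (p - s).val ≤ (t - s).val)
    (h₁' : (p - s').val ≤ (q - s').val) (h₂' : (q - s').val ≤ (t' - s').val) :
    (t' - s).val ≤ (s' - s).val ∧ (s' - s).val ≤ (t - s).val := by
  have hpq : p.val ≠ q.val := fun h => hpq (val_injective n h)
  have := s.val_lt; have := t.val_lt; have := p.val_lt; have := q.val_lt
  have := s'.val_lt; have := t'.val_lt
  have := val_sub_eq_or s q; have := val_sub_eq_or s p; have := val_sub_eq_or s t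
  have := val_sub_eq_or s t'; have := val_sub_eq_or s s'
  have := val_sub_eq_or s' p; have := val_sub_eq_or s' q; have := val_sub_eq_or s' t'
  omega

end ZMod

def addArc {V : Type*} (D : V → V → Prop) (u v : V) : V → V → Prop :=
  fun x y => D x y ∨ x = u ∧ y = v

section

variable {V : Type*} {D B : V → V → Prop} {u v : V}

theorem le_addArc : D ≤ addArc D u v := fun _ _ => Or.inl

theorem addArc_self : addArc D u v u v := Or.inr ⟨rfl, rfl⟩

theorem addArc_le (hD : D ≤ B) (huv : B u v) : addArc D u v ≤ B := by
  rintro x y (hxy | ⟨rfl, rfl⟩)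
  exacts [hD x y hxy, huv]

variable {n : ℕ} {f : ZMod n → V}

theorem IsExcellent.irrefl (hD : IsExcellent D f) (i : ZMod n) : ¬ D (f i) (f i) :=
  fun h => hD ⟨i, i, i, i, h, h, le_rfl, le_rfl⟩

theorem IsExcellent.isOrientedGraph (hD : IsExcellent D f) (hf : Function.Surjective f) :
    IsOrientedGraph D := by
  intro u v huv hvu
  obtain ⟨i, rfl⟩ := hf u
  obtain ⟨j, rfl⟩ := hf v
  exact hD ⟨i, j, j, i, huv, hvu, by simp, le_rfl⟩

theorem IsExcellent.exists_dominating_of_not_isExcellent_addArc [NeZero n]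
    (hD : IsExcellent D f) (hf : Function.Injective f) {p q : ZMod n} (hpq : p ≠ q)
    (h : ¬ IsExcellent (addArc D (f p) (f q)) f) :
    ∃ s t, D (f s) (f t) ∧ (q - s).val ≤ (p - s).val ∧ (p - s).val ≤ (t - s).val := by
  obtain ⟨i, j, s, t, hij, hst, h₁, h₂⟩ := not_not.mp h
  rcases hij with hij | ⟨hi, hj⟩ <;> rcases hst with hst | ⟨hs, ht⟩
  · exact absurd ⟨i, j, s, t, hij, hst, h₁, h₂⟩ hD
  · obtain rfl := hf hs
    obtain rfl := hf ht
    exact ⟨i, j, hij, h₁, h₂⟩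
  · obtain rfl := hf hi
    obtain rfl := hf hj
    refine ⟨s, t, hst, ZMod.val_sub_rotate (fun hst' => hD.irrefl s ?_) h₁ h₂⟩
    rwa [← hst'] at hst
  · obtain rfl := hf hi
    obtain rfl := hf hj
    obtain rfl := hf hs
    obtain rfl := hf ht
    rw [sub_self, ZMod.val_zero, nonpos_iff_eq_zero, ZMod.val_eq_zero, sub_eq_zero] at h₁
    exact (hpq h₁.symm).elim

theorem IsExcellent.addArc_or_addArc [NeZero n] (hD : IsExcellent D f)
    (hf : Function.Bijective f) (huv : u ≠ v) :
    IsExcellent (addArc D u v) f ∨ IsExcellent (addArc D v u) f := by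
  obtain ⟨p, rfl⟩ := hf.surjective u
  obtain ⟨q, rfl⟩ := hf.surjective v
  have hpq : p ≠ q := fun h => huv (congrArg f h)
  by_contra! h
  obtain ⟨s, t, hst, h₁, h₂⟩ :=
    hD.exists_dominating_of_not_isExcellent_addArc hf.injective hpq h.1
  obtain ⟨s', t', hst', h₁', h₂'⟩ :=
    hD.exists_dominating_of_not_isExcellent_addArc hf.injective hpq.symm h.2
  exact hD ⟨s, t, s', t', hst, hst', ZMod.val_sub_crossing hpq h₁ h₂ h₁' h₂'⟩

theorem isCompletion_of_maximal [NeZero n] {E A : V → V → Prop} (hf : Function.Bijective f)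
    (hE : ∀ u v, E u v → E v u) (hEirrefl : ∀ v, ¬ E v v)
    (hmax : Maximal (fun D => A ≤ D ∧ D ≤ A ⊔ E ∧ IsExcellent D f) D) :
    IsCompletion E A D := by
  obtain ⟨hAD, hDAE, hDex⟩ := hmax.prop
  have hext : ∀ u v, E u v → IsExcellent (addArc D u v) f → D u v := fun u v huv hex =>
    hmax.2 ⟨hAD.trans le_addArc, addArc_le hDAE (Or.inr huv), hex⟩ le_addArc u v addArc_self
  refine ⟨hDex.isOrientedGraph hf.surjective, hAD, fun u v huv => ?_, hDAE⟩
  have huv' : u ≠ v := by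
    rintro rfl
    exact hEirrefl u huv
  rcases hDex.addArc_or_addArc hf huv' with h | h
  exacts [Or.inl (hext u v huv h), Or.inr (hext v u (hE u v huv) h)]

end

/-- If a partially oriented graph has an excellent cyclic
ordering, then its unoriented edges can be oriented so that the same cyclic
ordering remains excellent for the resulting oriented graph. -/
theorem stmt_2 {V : Type*} [Fintype V] (E A : V → V → Prop)
    (hpog : IsPog E A) {n : ℕ} (f : ZMod n → V)
    (hbij : Function.Bijective f) (hex : IsExcellent A f) :
    ∃ D : V → V → Prop, IsCompletion E A D ∧ IsExcellent D f := by
  obtain ⟨hE, hEirrefl, -, -⟩ := hpog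
  have : NeZero n := ⟨by
    rintro rfl
    have := Finite.of_injective f hbij.injective
    exact not_finite (ZMod 0)⟩
  obtain ⟨D, hmax⟩ := (Set.toFinite {D | A ≤ D ∧ D ≤ A ⊔ E ∧ IsExcellent D f}).exists_maximal
    ⟨A, le_rfl, le_sup_left, hex⟩
  exact ⟨D, isCompletion_of_maximal hbij hE hEirrefl hmax, hmax.prop.2.2⟩
end

section
/- Every round oriented graph can be completed to a locally transitive tournament, i.e., arcs can be added between every pair of non-adjacent vertices so that the resulting digraph is a tournament in which every out-neighbourhood and every in-neighbourhood induces a transitive tournament. -/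
/-!
In a round ordering every out-neighbourhood is the cyclic interval right after the vertex and
every in-neighbourhood the one right before it. Orient each non-adjacent pair along the shorter
arc of the cycle. Inside the out-neighbourhood of `v`, a pair `x, y` with `x` before `y` (seen
from `v`) is then oriented `x → y`: an arc `y → x` would have an out-interval reaching `v`, and
a non-adjacent pair spanning at least half of the cycle forces `v → y` to be an arc of the
graph, whose in-interval contains `x`. So the completed tournament orders each
out-neighbourhood by position and is transitive there; in-neighbourhoods are symmetric.
-/

def completeWith {V : Type*} (R N : V → V → Prop) (u v : V) : Prop :=
  R u v ∨ (N u v ∧ ¬ R v u)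

theorem completesToTournament_completeWith {V : Type*} {R N : V → V → Prop}
    (hR : IsOrientedGraph R) (hN : IsTournament N) :
    CompletesToTournament R (completeWith R N) := by
  refine ⟨fun u v h => Or.inl h, ?_, ?_, ?_⟩
  · rintro u v (h | ⟨-, h⟩)
    exacts [hR u v h, h]
  · rintro u v (huv | ⟨huv, hvu'⟩) (hvu | ⟨hvu, huv'⟩)
    exacts [hR u v huv hvu, huv' huv, hvu' hvu, hN.1 u v huv hvu]
  · intro u v hne
    by_cases hvu : R v u
    · exact Or.inr (Or.inl hvu)
    rcases hN.2 u v hne with h | h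
    · exact Or.inl (Or.inr ⟨h, hvu⟩)
    · by_cases huv : R u v
      exacts [Or.inl (Or.inl huv), Or.inr (Or.inr ⟨h, huv⟩)]

theorem CompletesToTournament.comap {V W : Type*} {R T : V → V → Prop} {g : W → V}
    (hg : Function.Injective g) (h : CompletesToTournament R T) :
    CompletesToTournament (fun u v => R (g u) (g v)) (fun u v => T (g u) (g v)) :=
  ⟨fun _ _ => h.1 _ _, fun _ _ => h.2.1 _ _, fun _ _ => h.2.2.1 _ _,
    fun _ _ huv => h.2.2.2 _ _ (hg.ne huv)⟩

theorem IsLocallyTransitive.comap {V W : Type*} {T : V → V → Prop} (g : W → V)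
    (h : IsLocallyTransitive T) : IsLocallyTransitive (fun u v => T (g u) (g v)) :=
  ⟨fun _ _ _ _ => h.1 _ _ _ _, fun _ _ _ _ => h.2 _ _ _ _⟩

theorem neZero_of_injective {V : Type*} [Finite V] {n : ℕ} {f : ZMod n → V}
    (hf : Function.Injective f) : NeZero n :=
  ⟨by
    rintro rfl
    have := Finite.of_injective f hf
    exact not_finite (ZMod 0)⟩

section FwdDist

variable {n : ℕ}

def fwdDist (i j : ZMod n) : ℕ := (j - i).val

theorem fwdDist_eq_zero {i j : ZMod n} : fwdDist i j = 0 ↔ i = j := by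
  rw [fwdDist, ZMod.val_eq_zero, sub_eq_zero, eq_comm]

variable [NeZero n]

theorem fwdDist_lt (i j : ZMod n) : fwdDist i j < n := ZMod.val_lt _

theorem fwdDist_add_fwdDist (a b c : ZMod n) :
    fwdDist a b + fwdDist b c = fwdDist a c ∨ fwdDist a b + fwdDist b c = fwdDist a c + n := by
  have hmod : fwdDist a c = (fwdDist a b + fwdDist b c) % n := by
    rw [fwdDist, fwdDist, fwdDist, ← ZMod.val_add, sub_add_sub_cancel']
  have := fwdDist_lt a b
  have := fwdDist_lt b c
  by_cases h : fwdDist a b + fwdDist b c < n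
  · rw [Nat.mod_eq_of_lt h] at hmod
    omega
  · rw [Nat.mod_eq_sub_mod (by omega), Nat.mod_eq_of_lt (by omega)] at hmod
    omega

theorem fwdDist_add_fwdDist_swap {i j : ZMod n} (h : i ≠ j) : fwdDist i j + fwdDist j i = n := by
  have := fwdDist_add_fwdDist i j i
  have := fwdDist_eq_zero.not.mpr h
  rw [fwdDist_eq_zero.mpr rfl] at *
  omega

theorem fwdDist_left_injective (v : ZMod n) : Function.Injective (fwdDist v) :=
  fun _ _ h => sub_left_injective (ZMod.val_injective n h)

theorem fwdDist_right_injective (v : ZMod n) : Function.Injective (fun x => fwdDist x v) :=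
  fun _ _ h => sub_right_injective (ZMod.val_injective n h)

end FwdDist

section ShortArcs

variable {n : ℕ}

def shortArcTournament (n : ℕ) (i j : ZMod n) : Prop :=
  i ≠ j ∧ (2 * fwdDist i j < n ∨ 2 * fwdDist i j = n ∧ i.val < j.val)

theorem two_mul_fwdDist_le_of_shortArcTournament {i j : ZMod n} (h : shortArcTournament n i j) :
    2 * fwdDist i j ≤ n := by
  obtain ⟨-, h | ⟨h, -⟩⟩ := h <;> omega

variable [NeZero n]

theorem isTournament_shortArcTournament : IsTournament (shortArcTournament n) := by
  refine ⟨fun i j ⟨hne, hij⟩ ⟨_, hji⟩ => ?_, fun i j hne => ?_⟩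
  · have := fwdDist_add_fwdDist_swap hne
    omega
  · have := fwdDist_add_fwdDist_swap hne
    have := (ZMod.val_injective n).ne hne
    simp only [shortArcTournament, ne_eq, hne, not_false_eq_true, Ne.symm hne, true_and]
    omega

variable {R N : ZMod n → ZMod n → Prop} (hR : IsOrientedGraph R) (hN : IsTournament N)
  (hshort : ∀ i j, N i j → 2 * fwdDist i j ≤ n)
  (hout : ∀ i j k, R i j → 0 < fwdDist i k → fwdDist i k ≤ fwdDist i j → R i k)
  (hin : ∀ i j k, R j i → 0 < fwdDist k i → fwdDist k i ≤ fwdDist j i → R k i)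

include hR hN hshort hout hin

theorem completeWith_out_of_fwdDist_lt {v x y : ZMod n} (hvx : completeWith R N v x)
    (hvy : completeWith R N v y) (hlt : fwdDist v x < fwdDist v y) :
    completeWith R N x y := by
  obtain ⟨-, hnot_rev, hasymm, -⟩ := completesToTournament_completeWith hR hN
  have hvx_ne : v ≠ x := fun h => hasymm v x hvx (h ▸ hvx)
  have hvy_ne : v ≠ y := fun h => hasymm v y hvy (h ▸ hvy)
  have hxy_ne : x ≠ y := by rintro rfl; omega
  have hvxy := fwdDist_add_fwdDist v x y
  have hvy_lt := fwdDist_lt v y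
  have hxy_swap := fwdDist_add_fwdDist_swap hxy_ne
  have hvy_swap := fwdDist_add_fwdDist_swap hvy_ne
  have hvx_pos := fwdDist_eq_zero.not.mpr hvx_ne
  by_contra hxy
  by_cases hyx : R y x
  · exact hnot_rev v y hvy (hout y x v hyx (by omega) (by omega))
  have hNyx : N y x := (hN.2 x y hxy_ne).resolve_left fun h => hxy (Or.inr ⟨h, hyx⟩)
  have hyx_short := hshort y x hNyx
  have hRvy : R v y := hvy.resolve_right fun h => by have := hshort v y h.1; omega
  exact hxy (Or.inl (hin y v x hRvy (by omega) (by omega)))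

theorem completeWith_in_of_fwdDist_lt {v x y : ZMod n} (hxv : completeWith R N x v)
    (hyv : completeWith R N y v) (hlt : fwdDist y v < fwdDist x v) :
    completeWith R N x y := by
  obtain ⟨-, hnot_rev, hasymm, -⟩ := completesToTournament_completeWith hR hN
  have hxv_ne : x ≠ v := fun h => hasymm x v hxv (h ▸ hxv)
  have hyv_ne : y ≠ v := fun h => hasymm y v hyv (h ▸ hyv)
  have hxy_ne : x ≠ y := by rintro rfl; omega
  have hxyv := fwdDist_add_fwdDist x y v
  have hxv_lt := fwdDist_lt x v
  have hxy_swap := fwdDist_add_fwdDist_swap hxy_ne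
  have hxv_swap := fwdDist_add_fwdDist_swap hxv_ne
  have hyv_pos := fwdDist_eq_zero.not.mpr hyv_ne
  by_contra hxy
  by_cases hyx : R y x
  · exact hnot_rev x v hxv (hin x y v hyx (by omega) (by omega))
  have hNyx : N y x := (hN.2 x y hxy_ne).resolve_left fun h => hxy (Or.inr ⟨h, hyx⟩)
  have hyx_short := hshort y x hNyx
  have hRxv : R x v := hxv.resolve_right fun h => by have := hshort x v h.1; omega
  exact hxy (Or.inl (hout x v y hRxv (by omega) (by omega)))

theorem completeWith_iff_fwdDist_lt_of_out {v x y : ZMod n} (hvx : completeWith R N v x)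
    (hvy : completeWith R N v y) : completeWith R N x y ↔ fwdDist v x < fwdDist v y := by
  refine ⟨fun hxy => ?_, completeWith_out_of_fwdDist_lt hR hN hshort hout hin hvx hvy⟩
  obtain ⟨-, -, hasymm, -⟩ := completesToTournament_completeWith hR hN
  rcases lt_trichotomy (fwdDist v x) (fwdDist v y) with h | h | h
  · exact h
  · cases fwdDist_left_injective v h
    exact absurd hxy (hasymm x x hxy)
  · exact absurd (completeWith_out_of_fwdDist_lt hR hN hshort hout hin hvy hvx h)
      (hasymm x y hxy)

theorem completeWith_iff_fwdDist_lt_of_in {v x y : ZMod n} (hxv : completeWith R N x v)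
    (hyv : completeWith R N y v) : completeWith R N x y ↔ fwdDist y v < fwdDist x v := by
  refine ⟨fun hxy => ?_, completeWith_in_of_fwdDist_lt hR hN hshort hout hin hxv hyv⟩
  obtain ⟨-, -, hasymm, -⟩ := completesToTournament_completeWith hR hN
  rcases lt_trichotomy (fwdDist y v) (fwdDist x v) with h | h | h
  · exact h
  · cases fwdDist_right_injective v h
    exact absurd hxy (hasymm x x hxy)
  · exact absurd (completeWith_in_of_fwdDist_lt hR hN hshort hout hin hyv hxv h)
      (hasymm x y hxy)

theorem isLocallyTransitive_completeWith : IsLocallyTransitive (completeWith R N) := by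
  have hout_iff := @completeWith_iff_fwdDist_lt_of_out _ _ _ _ hR hN hshort hout hin
  have hin_iff := @completeWith_iff_fwdDist_lt_of_in _ _ _ _ hR hN hshort hout hin
  refine ⟨fun v x y z hvx hvy hvz hxy hyz => ?_, fun v x y z hxv hyv hzv hxy hyz => ?_⟩
  · exact (hout_iff hvx hvz).2 (((hout_iff hvx hvy).1 hxy).trans ((hout_iff hvy hvz).1 hyz))
  · exact (hin_iff hxv hzv).2 (((hin_iff hyv hzv).1 hyz).trans ((hin_iff hxv hyv).1 hxy))

end ShortArcs

theorem IsRoundOrdering.out_of_fwdDist_le {V : Type*} {A : V → V → Prop} {n : ℕ}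
    {f : ZMod n → V} (h : IsRoundOrdering A f) {i j k : ZMod n} (hij : A (f i) (f j))
    (hk : 0 < fwdDist i k) (hkj : fwdDist i k ≤ fwdDist i j) : A (f i) (f k) :=
  (h.2.1 i k).2 ⟨hk, hkj.trans ((h.2.1 i j).1 hij).2⟩

theorem IsRoundOrdering.in_of_fwdDist_le {V : Type*} {A : V → V → Prop} {n : ℕ}
    {f : ZMod n → V} (h : IsRoundOrdering A f) {i j k : ZMod n} (hji : A (f j) (f i))
    (hk : 0 < fwdDist k i) (hkj : fwdDist k i ≤ fwdDist j i) : A (f k) (f i) :=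
  (h.2.2 i k).2 ⟨hk, hkj.trans ((h.2.2 i j).1 hji).2⟩

/-- Every round oriented graph can be completed (by adding
arcs between non-adjacent pairs) to a locally transitive tournament. -/
theorem stmt_4 {V : Type*} [Fintype V] (A : V → V → Prop)
    (hA : IsOrientedGraph A)
    (hround : ∃ (n : ℕ) (f : ZMod n → V), IsRoundOrdering A f) :
    ∃ T : V → V → Prop, CompletesToTournament A T ∧ IsLocallyTransitive T := by
  obtain ⟨n, f, hf⟩ := hround
  have := neZero_of_injective hf.1.injective
  set e := Equiv.ofBijective f hf.1
  set R : ZMod n → ZMod n → Prop := fun i j => A (f i) (f j)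
  have hR : IsOrientedGraph R := fun i j => hA (f i) (f j)
  have hRA : (fun u v => R (e.symm u) (e.symm v)) = A := by
    funext u v
    exact congrArg₂ A (e.apply_symm_apply u) (e.apply_symm_apply v)
  refine ⟨fun u v => completeWith R (shortArcTournament n) (e.symm u) (e.symm v), ?_, ?_⟩
  · rw [← hRA]
    exact (completesToTournament_completeWith hR isTournament_shortArcTournament).comap
      e.symm.injective
  · exact (isLocallyTransitive_completeWith hR isTournament_shortArcTournament
      (fun _ _ => two_mul_fwdDist_le_of_shortArcTournament)
      (fun _ _ _ => hf.out_of_fwdDist_le) (fun _ _ _ => hf.in_of_fwdDist_le)).comap e.symm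
end

section
/- Let W be the partially oriented wheel on seven vertices c, c_11, c_12, c_21, c_22, c_31, c_32, where c dominates all six rim vertices, the rim contains the arcs (c_12, c_21), (c_22, c_31), (c_32, c_11), and the edges c_11 c_12, c_21 c_22, c_31 c_32 are unoriented. If these three edges are oriented as (c_11, c_12), (c_21, c_22), (c_31, c_32), the resulting oriented graph cannot be completed to a locally transitive tournament on seven vertices; for each of the other seven orientations of these three edges, the resulting oriented graph can be completed to a locally transitive tournament. -/
/-- The partially oriented 6-wheel `W` with hub `c = 0` and rim
`c₁₁ = 1, c₁₂ = 2, c₂₁ = 3, c₂₂ = 4, c₃₁ = 5, c₃₂ = 6`, in which the three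
unoriented rim edges `c₁₁c₁₂, c₂₁c₂₂, c₃₁c₃₂` have been oriented according to
the booleans `b₁, b₂, b₃` (`true` = forward, e.g. `(c₁₁, c₁₂)`). -/
def wheelArcs (b₁ b₂ b₃ : Bool) : Fin 7 → Fin 7 → Prop := fun u v =>
  (u = 0 ∧ v ≠ 0) ∨ (u = 2 ∧ v = 3) ∨ (u = 4 ∧ v = 5) ∨ (u = 6 ∧ v = 1) ∨
  (if b₁ then u = 1 ∧ v = 2 else u = 2 ∧ v = 1) ∨
  (if b₂ then u = 3 ∧ v = 4 else u = 4 ∧ v = 3) ∨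
  (if b₃ then u = 5 ∧ v = 6 else u = 6 ∧ v = 5)

/-
The hub `c` dominates the whole rim, so in a locally transitive completion the rim
vertices span a transitive subtournament; this is impossible when the rim arcs form the directed
6-cycle `c₁₁ → c₁₂ → ⋯ → c₃₂ → c₁₁`, i.e. exactly when all three edges are oriented forward.
Conversely, if some edge is oriented backwards the rim arcs are acyclic, and ordering `c` first
and the rim along a topological order gives a transitive, hence locally transitive, tournament.
-/

section

variable {V : Type*}

theorem HasCycleIn.mono {A B : V → V → Prop} {S S' : Set V} (hAB : ∀ u v, A u v → B u v)
    (hSS' : S ⊆ S') (h : HasCycleIn A S) : HasCycleIn B S' := by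
  obtain ⟨n, f, hn, hf, hfS, hfA⟩ := h
  exact ⟨n, f, hn, hf, fun i => hSS' (hfS i), fun i => hAB _ _ (hfA i)⟩

theorem IsLocallyTransitive.not_hasCycleIn_outNeighbourhood {T : V → V → Prop}
    (hT : IsLocallyTransitive T) (hasym : IsOrientedGraph T) (v : V) :
    ¬ HasCycleIn T {x | T v x} := by
  rintro ⟨n, f, hn, -, hfv, hfT⟩
  -- Transitivity inside the out-neighbourhood carries `f 0 → f k` around the cycle back to `f 0`.
  have hfar : ∀ k : ℕ, T (f 0) (f ((k + 1 : ℕ) : ZMod n)) := by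
    intro k
    induction k with
    | zero => simpa using hfT 0
    | succ k ih =>
      have hstep := hfT ((k + 1 : ℕ) : ZMod n)
      push_cast at ih hstep ⊢
      exact hT.1 v _ _ _ (hfv 0) (hfv _) (hfv _) ih hstep
  have hloop : T (f 0) (f 0) := by
    simpa [Nat.sub_add_cancel (by omega : 1 ≤ n)] using hfar (n - 1)
  exact hasym _ _ hloop hloop

theorem isLocallyTransitive_of_transitive {T : V → V → Prop}
    (hT : ∀ x y z, T x y → T y z → T x z) : IsLocallyTransitive T :=
  ⟨fun _ x y z _ _ _ hxy hyz => hT x y z hxy hyz, fun _ x y z _ _ _ hxy hyz => hT x y z hxy hyz⟩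

theorem completesToTournament_of_ranking {α : Type*} [LinearOrder α] {A : V → V → Prop}
    {r : V → α} (hr : Function.Injective r) (hA : ∀ u v, A u v → r u < r v) :
    CompletesToTournament A (fun u v => r u < r v) :=
  ⟨hA, fun u v huv hvu => (hA v u hvu).asymm huv,
    fun _ _ huv hvu => huv.asymm hvu, fun _ _ huv => lt_or_gt_of_ne (hr.ne huv)⟩

end

instance (b₁ b₂ b₃ : Bool) : DecidableRel (wheelArcs b₁ b₂ b₃) := fun u v => by
  unfold wheelArcs; infer_instance

theorem hasCycleIn_wheelArcs_hub_outNeighbourhood :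
    HasCycleIn (wheelArcs true true true) {x | wheelArcs true true true 0 x} :=
  ⟨6, fun i => Fin.succ i, by norm_num, by decide, fun i => by fin_cases i <;> decide,
    fun i => by fin_cases i <;> decide⟩

theorem exists_ranking_wheelArcs {b₁ b₂ b₃ : Bool} (h : ¬ (b₁ = true ∧ b₂ = true ∧ b₃ = true)) :
    ∃ r : Fin 7 → ℕ, Function.Injective r ∧ ∀ u v, wheelArcs b₁ b₂ b₃ u v → r u < r v := by
  cases b₁ <;> cases b₂ <;> cases b₃
  · exact ⟨![0, 5, 1, 3, 2, 6, 4], by decide, by decide⟩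
  · exact ⟨![0, 6, 1, 3, 2, 4, 5], by decide, by decide⟩
  · exact ⟨![0, 5, 1, 2, 3, 6, 4], by decide, by decide⟩
  · exact ⟨![0, 6, 1, 2, 3, 4, 5], by decide, by decide⟩
  · exact ⟨![0, 3, 4, 5, 1, 6, 2], by decide, by decide⟩
  · exact ⟨![0, 4, 5, 6, 1, 2, 3], by decide, by decide⟩
  · exact ⟨![0, 2, 3, 4, 5, 6, 1], by decide, by decide⟩
  · exact absurd ⟨rfl, rfl, rfl⟩ h

/-- Orienting the three free edges of the wheel `W` all
forward yields an oriented graph with no completion to a locally transitive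
tournament on 7 vertices; each of the remaining 7 orientations yields one that
can be so completed. -/
theorem stmt_7 (b₁ b₂ b₃ : Bool) :
    (∃ T : Fin 7 → Fin 7 → Prop,
        CompletesToTournament (wheelArcs b₁ b₂ b₃) T ∧ IsLocallyTransitive T) ↔
      ¬ (b₁ = true ∧ b₂ = true ∧ b₃ = true) := by
  constructor
  · rintro ⟨T, ⟨hAT, -, hT, -⟩, hlt⟩ ⟨rfl, rfl, rfl⟩
    exact hlt.not_hasCycleIn_outNeighbourhood hT 0
      (hasCycleIn_wheelArcs_hub_outNeighbourhood.mono hAT fun x => hAT 0 x)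
  · intro h
    obtain ⟨r, hr, hA⟩ := exists_ranking_wheelArcs h
    exact ⟨_, completesToTournament_of_ranking hr hA,
      isLocallyTransitive_of_transitive fun _ _ _ => lt_trans⟩
end

section
/- Let G be a graph and G^+ its auxiliary graph. Then G has a local tournament orientation if and only if G^+ is bipartite. Moreover, when G^+ is bipartite, for any two vertices (u,v) and (u',v') at odd distance in G^+, every local tournament orientation of G contains exactly one of them as an arc, and the arc set of every local tournament orientation of G is a colour class of G^+. -/
/-- The vertex set of the auxiliary graph `G⁺`: ordered pairs `(u,v)` with
`uv` an edge of `G`. -/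
abbrev EdgePair {V : Type*} (G : SimpleGraph V) := {p : V × V // G.Adj p.1 p.2}

/-- The adjacency rule of the auxiliary graph `G⁺`. -/
def auxRel {V : Type*} (G : SimpleGraph V) (x y : EdgePair G) : Prop :=
  (x.1.1 = y.1.1 ∧ ¬ G.Adj x.1.2 y.1.2) ∨
  (¬ G.Adj x.1.1 y.1.1 ∧ x.1.2 = y.1.2) ∨
  (x.1.1 = y.1.2 ∧ x.1.2 = y.1.1)

/-- The auxiliary graph `G⁺` of a graph `G`. -/
def auxGraph {V : Type*} (G : SimpleGraph V) : SimpleGraph (EdgePair G) :=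
  SimpleGraph.fromRel (auxRel G)

/-- An orientation of a graph `G`: an asymmetric choice of exactly one
direction for each edge of `G`. -/
def IsOrientation {V : Type*} (G : SimpleGraph V) (D : V → V → Prop) : Prop :=
  (∀ u v : V, D u v → G.Adj u v) ∧ (∀ u v : V, D u v → ¬ D v u) ∧
  (∀ u v : V, G.Adj u v → D u v ∨ D v u)

/-- The arcs `A` of a partial orientation of `G` are consentaneous: no two arcs
correspond to vertices of `G⁺` at odd distance, and for vertices of `G⁺` at even
distance (in the same component) either both corresponding arcs are present or
neither is. -/
def Consentaneous {V : Type*} (G : SimpleGraph V) (A : V → V → Prop) : Prop :=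
  (¬ ∃ x y : EdgePair G, A x.1.1 x.1.2 ∧ A y.1.1 y.1.2 ∧ Odd ((auxGraph G).dist x y)) ∧
  (∀ x y : EdgePair G, (auxGraph G).Reachable x y → Even ((auxGraph G).dist x y) →
    (A x.1.1 x.1.2 ↔ A y.1.1 y.1.2))

/-- The edge `uv` of the underlying graph is oriented in the partial orientation `A`. -/
def EdgeOriented {V : Type*} (A : V → V → Prop) (u v : V) : Prop := A u v ∨ A v u

/-- `P = (G, A)` has no bad triple: no triangle of `G` whose three edges lie in
three different connected components of `G⁺` and exactly two of whose edges are
oriented. -/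
def NoBadTriple {V : Type*} (G : SimpleGraph V) (A : V → V → Prop) : Prop :=
  ¬ ∃ (x y z : V) (hxy : G.Adj x y) (hyz : G.Adj y z) (hzx : G.Adj z x),
    ¬ (auxGraph G).Reachable ⟨(x, y), hxy⟩ ⟨(y, z), hyz⟩ ∧
    ¬ (auxGraph G).Reachable ⟨(y, z), hyz⟩ ⟨(z, x), hzx⟩ ∧
    ¬ (auxGraph G).Reachable ⟨(x, y), hxy⟩ ⟨(z, x), hzx⟩ ∧
    ((EdgeOriented A x y ∧ EdgeOriented A y z ∧ ¬ EdgeOriented A z x) ∨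
     (EdgeOriented A x y ∧ ¬ EdgeOriented A y z ∧ EdgeOriented A z x) ∨
     (¬ EdgeOriented A x y ∧ EdgeOriented A y z ∧ EdgeOriented A z x))

/-!
For an orientation `D` of `G`, the three adjacency rules of `G⁺` are exactly the local
tournament conditions: two arcs out of (into) a common vertex `u` force their other ends
to be adjacent, and an edge is oriented one way iff it is not oriented the other. Hence `D`
is a local tournament iff `(u, v) ↦ [D u v]` is a proper 2-colouring of `G⁺`; conversely the
`true` class of any 2-colouring of `G⁺` is the arc set of a local tournament orientation.
In a 2-coloured graph, vertices at odd distance get different colours.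
-/

section

open SimpleGraph

variable {V : Type*} {G : SimpleGraph V}

lemma auxGraph_adj_iff {x y : EdgePair G} :
    (auxGraph G).Adj x y ↔ x ≠ y ∧ (auxRel G x y ∨ auxRel G y x) :=
  fromRel_adj _ _ _

lemma auxGraph_adj_of_auxRel {x y : EdgePair G} (hne : x ≠ y) (h : auxRel G x y) :
    (auxGraph G).Adj x y :=
  auxGraph_adj_iff.2 ⟨hne, Or.inl h⟩

lemma auxGraph_adj_swap {u v : V} (h : G.Adj u v) :
    (auxGraph G).Adj ⟨(u, v), h⟩ ⟨(v, u), h.symm⟩ :=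
  auxGraph_adj_of_auxRel (fun heq => h.ne (congrArg (·.1.1) heq)) (Or.inr (Or.inr ⟨rfl, rfl⟩))

lemma auxGraph_adj_of_common_tail {v x y : V} (hx : G.Adj v x) (hy : G.Adj v y) (hxy : x ≠ y)
    (hn : ¬ G.Adj x y) : (auxGraph G).Adj ⟨(v, x), hx⟩ ⟨(v, y), hy⟩ :=
  auxGraph_adj_of_auxRel (fun heq => hxy (congrArg (·.1.2) heq)) (Or.inl ⟨rfl, hn⟩)

lemma auxGraph_adj_of_common_head {v x y : V} (hx : G.Adj x v) (hy : G.Adj y v) (hxy : x ≠ y)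
    (hn : ¬ G.Adj x y) : (auxGraph G).Adj ⟨(x, v), hx⟩ ⟨(y, v), hy⟩ :=
  auxGraph_adj_of_auxRel (fun heq => hxy (congrArg (·.1.1) heq)) (Or.inr (Or.inl ⟨hn, rfl⟩))

lemma SimpleGraph.Coloring.not_adj_of_eq_true {α : Type*} {H : SimpleGraph α}
    (c : H.Coloring Bool) {u v : α} (hu : c u = true) (hv : c v = true) : ¬ H.Adj u v :=
  fun h => c.valid h (hu.trans hv.symm)

lemma SimpleGraph.Coloring.not_congr_of_odd_dist {α : Type*} {H : SimpleGraph α}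
    (c : H.Coloring Bool) {u v : α} (h : Odd (H.dist u v)) : (¬ c u ↔ c v) := by
  obtain ⟨p, hp⟩ := (Reachable.of_dist_ne_zero (Nat.ne_of_odd_add h)).exists_walk_length_eq_dist
  exact c.odd_length_iff_not_congr p |>.1 (hp ▸ h)

namespace IsOrientation

variable {D : V → V → Prop}

lemma adj (hO : IsOrientation G D) {u v : V} (h : D u v ∨ D v u) : G.Adj u v :=
  h.elim (hO.1 u v) fun h' => (hO.1 v u h').symm

lemma arc_iff_not_reverse (hO : IsOrientation G D) {u v : V} (h : G.Adj u v) :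
    D u v ↔ ¬ D v u :=
  ⟨hO.2.1 u v, (hO.2.2 u v h).resolve_right⟩

variable (hO : IsOrientation G D) (hL : IsLocalTournament D)
include hO hL

lemma adj_of_arcs_from {u v w : V} (hvw : v ≠ w) (hv : D u v) (hw : D u w) : G.Adj v w :=
  hO.adj (hL.2.1 u v w hv hw hvw)

lemma adj_of_arcs_into {u v w : V} (hvw : v ≠ w) (hv : D v u) (hw : D w u) : G.Adj v w :=
  hO.adj (hL.2.2 u v w hv hw hvw)

lemma arc_iff_not_of_auxRel {x y : EdgePair G} (hne : x ≠ y) (h : auxRel G x y) :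
    D x.1.1 x.1.2 ↔ ¬ D y.1.1 y.1.2 := by
  obtain ⟨⟨u, v⟩, huv⟩ := x
  obtain ⟨⟨u', v'⟩, hu'v'⟩ := y
  rcases h with ⟨rfl, hnadj⟩ | ⟨hnadj, rfl⟩ | ⟨rfl, rfl⟩
  · have hvv' : v ≠ v' := by rintro rfl; exact hne rfl
    refine ⟨fun h h' => hnadj (hO.adj_of_arcs_from hL hvv' h h'), fun h' => ?_⟩
    by_contra h
    exact hnadj (hO.adj_of_arcs_into hL hvv' ((hO.arc_iff_not_reverse huv.symm).2 h)
      ((hO.arc_iff_not_reverse hu'v'.symm).2 h'))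
  · have huu' : u ≠ u' := by rintro rfl; exact hne rfl
    refine ⟨fun h h' => hnadj (hO.adj_of_arcs_into hL huu' h h'), fun h' => ?_⟩
    by_contra h
    exact hnadj (hO.adj_of_arcs_from hL huu' ((hO.arc_iff_not_reverse huv.symm).2 h)
      ((hO.arc_iff_not_reverse hu'v'.symm).2 h'))
  · exact hO.arc_iff_not_reverse huv

lemma arc_iff_not_of_auxGraph_adj {x y : EdgePair G} (h : (auxGraph G).Adj x y) :
    D x.1.1 x.1.2 ↔ ¬ D y.1.1 y.1.2 := by
  obtain ⟨hne, h | h⟩ := auxGraph_adj_iff.1 h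
  · exact hO.arc_iff_not_of_auxRel hL hne h
  · exact iff_not_comm.1 (hO.arc_iff_not_of_auxRel hL hne.symm h)

open Classical in
noncomputable def auxColoring : (auxGraph G).Coloring Bool :=
  Coloring.mk (fun x => decide (D x.1.1 x.1.2)) fun h heq => by
    have := hO.arc_iff_not_of_auxGraph_adj hL h
    simp only [decide_eq_decide] at heq
    tauto

lemma auxColoring_apply (x : EdgePair G) : hO.auxColoring hL x = true ↔ D x.1.1 x.1.2 := by
  classical
  exact decide_eq_true_iff

end IsOrientation

def arcsOfColoring (C : (auxGraph G).Coloring Bool) (u v : V) : Prop :=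
  ∃ h : G.Adj u v, C ⟨(u, v), h⟩ = true

section arcsOfColoring

variable (C : (auxGraph G).Coloring Bool)

lemma isOrientation_arcsOfColoring : IsOrientation G (arcsOfColoring C) := by
  refine ⟨fun u v h => h.1, fun u v ⟨h, hc⟩ ⟨_, hc'⟩ =>
    C.not_adj_of_eq_true hc hc' (auxGraph_adj_swap h), fun u v h => ?_⟩
  have hne := C.valid (auxGraph_adj_swap h)
  cases hc : C ⟨(u, v), h⟩
  · exact Or.inr ⟨h.symm, by simpa [hc] using hne.symm⟩
  · exact Or.inl ⟨h, hc⟩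

lemma isLocalTournament_arcsOfColoring : IsLocalTournament (arcsOfColoring C) := by
  have hO := isOrientation_arcsOfColoring C
  refine ⟨hO.2.1, fun v x y ⟨hx, hcx⟩ ⟨hy, hcy⟩ hxy => hO.2.2 x y ?_,
    fun v x y ⟨hx, hcx⟩ ⟨hy, hcy⟩ hxy => hO.2.2 x y ?_⟩
  · by_contra hn
    exact C.not_adj_of_eq_true hcx hcy (auxGraph_adj_of_common_tail hx hy hxy hn)
  · by_contra hn
    exact C.not_adj_of_eq_true hcx hcy (auxGraph_adj_of_common_head hx hy hxy hn)

end arcsOfColoring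

end

theorem stmt_10_general {V : Type*} (G : SimpleGraph V) :
    ((∃ D : V → V → Prop, IsOrientation G D ∧ IsLocalTournament D) ↔
      (auxGraph G).Colorable 2) ∧
    (∀ D : V → V → Prop, IsOrientation G D → IsLocalTournament D →
      ∀ x y : EdgePair G, Odd ((auxGraph G).dist x y) →
        (D x.1.1 x.1.2 ↔ ¬ D y.1.1 y.1.2)) ∧
    (∀ D : V → V → Prop, IsOrientation G D → IsLocalTournament D →
      ∃ C : (auxGraph G).Coloring Bool,
        ∀ x : EdgePair G, D x.1.1 x.1.2 ↔ C x = true) := by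
  refine ⟨⟨fun ⟨D, hO, hL⟩ => ?_, fun ⟨C⟩ => ?_⟩, fun D hO hL x y hodd => ?_,
    fun D hO hL => ⟨hO.auxColoring hL, fun x => (hO.auxColoring_apply hL x).symm⟩⟩
  · simpa using (hO.auxColoring hL).colorable
  · let C' := (auxGraph G).recolorOfEquiv finTwoEquiv C
    exact ⟨arcsOfColoring C', isOrientation_arcsOfColoring C',
      isLocalTournament_arcsOfColoring C'⟩
  · have h := (hO.auxColoring hL).not_congr_of_odd_dist hodd
    rw [hO.auxColoring_apply, hO.auxColoring_apply] at h
    exact iff_not_comm.1 h.symm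

/-- A graph `G` has a local tournament orientation iff its
auxiliary graph `G⁺` is bipartite; moreover, when `G⁺` is bipartite, any two
vertices of `G⁺` at odd distance give rise to exactly one arc of any local
tournament orientation of `G`, and the arc set of every local tournament
orientation of `G` is a colour class of `G⁺`. -/
theorem stmt_10 {V : Type*} [Fintype V] (G : SimpleGraph V) :
    ((∃ D : V → V → Prop, IsOrientation G D ∧ IsLocalTournament D) ↔
      (auxGraph G).Colorable 2) ∧
    (∀ D : V → V → Prop, IsOrientation G D → IsLocalTournament D →
      ∀ x y : EdgePair G, Odd ((auxGraph G).dist x y) →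
        (D x.1.1 x.1.2 ↔ ¬ D y.1.1 y.1.2)) ∧
    (∀ D : V → V → Prop, IsOrientation G D → IsLocalTournament D →
      ∃ C : (auxGraph G).Coloring Bool,
        ∀ x : EdgePair G, D x.1.1 x.1.2 ↔ C x = true) :=
  stmt_10_general G
end

section
/- Given a partially oriented graph P, it can be decided in polynomial time whether P can be completed to a local tournament; specifically, P can be so completed if and only if the auxiliary graph of the underlying graph G of P is bipartite and the set of vertices of G^+ corresponding to the arcs of P is contained in a single colour class of G^+. -/
/-! In a local-tournament orientation `D` of `G`, any two pairs adjacent in `G⁺` are oriented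
oppositely: for `(u,v)` and `(v,u)` because `D` orients each edge once, and for `(v,x)`, `(v,y)`
(or `(x,v)`, `(y,v)`) with `x`, `y` non-adjacent because two out-neighbours (in-neighbours) of
`v` must be adjacent. Hence "is an arc of `D`" is a proper 2-colouring of `G⁺` that colours
every arc of `A` alike. Conversely, reading the colour `true` of a 2-colouring of `G⁺` as
"is an arc", the same three adjacencies say that the result is an orientation of `G` in which
out- and in-neighbourhoods are tournaments. -/

namespace auxGraph

variable {V : Type*} {G : SimpleGraph V}

theorem adj_swap {u v : V} (h : G.Adj u v) :
    (auxGraph G).Adj ⟨(u, v), h⟩ ⟨(v, u), h.symm⟩ := by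
  refine (SimpleGraph.fromRel_adj _ _ _).2 ⟨fun heq => h.ne ?_, .inl (.inr (.inr ⟨rfl, rfl⟩))⟩
  exact congrArg (fun p : EdgePair G => p.1.1) heq

theorem adj_of_fst_eq {v x y : V} (hx : G.Adj v x) (hy : G.Adj v y) (hxy : x ≠ y)
    (hn : ¬ G.Adj x y) : (auxGraph G).Adj ⟨(v, x), hx⟩ ⟨(v, y), hy⟩ :=
  (SimpleGraph.fromRel_adj _ _ _).2
    ⟨fun heq => hxy (congrArg (fun p : EdgePair G => p.1.2) heq), .inl (.inl ⟨rfl, hn⟩)⟩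

theorem adj_of_snd_eq {v x y : V} (hx : G.Adj x v) (hy : G.Adj y v) (hxy : x ≠ y)
    (hn : ¬ G.Adj x y) : (auxGraph G).Adj ⟨(x, v), hx⟩ ⟨(y, v), hy⟩ :=
  (SimpleGraph.fromRel_adj _ _ _).2
    ⟨fun heq => hxy (congrArg (fun p : EdgePair G => p.1.1) heq), .inl (.inr (.inl ⟨hn, rfl⟩))⟩

end auxGraph

section LocalTournament

variable {V : Type*} {G : SimpleGraph V} {D : V → V → Prop}

theorem IsOrientation.rev_iff_not (hO : IsOrientation G D) {u v : V} (h : G.Adj u v) :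
    D v u ↔ ¬ D u v :=
  ⟨fun hvu huv => hO.2.1 u v huv hvu, (hO.2.2 u v h).resolve_left⟩

theorem IsLocalTournament.adj_of_out (hD : IsLocalTournament D) (hO : IsOrientation G D)
    {v x y : V} (hx : D v x) (hy : D v y) (hxy : x ≠ y) : G.Adj x y :=
  (hD.2.1 v x y hx hy hxy).elim (hO.1 x y) fun h => (hO.1 y x h).symm

theorem IsLocalTournament.adj_of_in (hD : IsLocalTournament D) (hO : IsOrientation G D)
    {v x y : V} (hx : D x v) (hy : D y v) (hxy : x ≠ y) : G.Adj x y :=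
  (hD.2.2 v x y hx hy hxy).elim (hO.1 x y) fun h => (hO.1 y x h).symm

theorem IsLocalTournament.iff_not_of_auxRel (hD : IsLocalTournament D)
    (hO : IsOrientation G D) {x y : EdgePair G} (hr : auxRel G x y) (hne : x ≠ y) :
    D x.1.1 x.1.2 ↔ ¬ D y.1.1 y.1.2 := by
  obtain ⟨⟨a, b⟩, hx⟩ := x
  obtain ⟨⟨c, d⟩, hy⟩ := y
  rw [auxRel] at hr
  dsimp only at hr ⊢
  rcases hr with ⟨rfl, hn⟩ | ⟨hn, rfl⟩ | ⟨rfl, rfl⟩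
  · have hbd : b ≠ d := by rintro rfl; exact hne rfl
    have hout : ¬ (D a b ∧ D a d) := fun h => hn (hD.adj_of_out hO h.1 h.2 hbd)
    have hin : ¬ (D b a ∧ D d a) := fun h => hn (hD.adj_of_in hO h.1 h.2 hbd)
    rw [hO.rev_iff_not hx, hO.rev_iff_not hy] at hin
    tauto
  · have hac : a ≠ c := by rintro rfl; exact hne rfl
    have hin : ¬ (D a b ∧ D c b) := fun h => hn (hD.adj_of_in hO h.1 h.2 hac)
    have hout : ¬ (D b a ∧ D b c) := fun h => hn (hD.adj_of_out hO h.1 h.2 hac)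
    rw [hO.rev_iff_not hx, hO.rev_iff_not hy] at hout
    tauto
  · exact hO.rev_iff_not hx.symm

theorem IsLocalTournament.iff_not_of_auxGraph_adj (hD : IsLocalTournament D)
    (hO : IsOrientation G D) {x y : EdgePair G} (h : (auxGraph G).Adj x y) :
    D x.1.1 x.1.2 ↔ ¬ D y.1.1 y.1.2 := by
  obtain ⟨hne, hr | hr⟩ := (SimpleGraph.fromRel_adj _ _ _).1 h
  · exact hD.iff_not_of_auxRel hO hr hne
  · have := hD.iff_not_of_auxRel hO hr hne.symm
    tauto

theorem IsLocalTournament.exists_auxGraph_coloring (hD : IsLocalTournament D)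
    (hO : IsOrientation G D) :
    ∃ C : (auxGraph G).Coloring Bool, ∀ x : EdgePair G, C x = true ↔ D x.1.1 x.1.2 := by
  classical
  refine ⟨SimpleGraph.Coloring.mk (fun x => decide (D x.1.1 x.1.2)) fun h => ?_,
    fun x => decide_eq_true_iff⟩
  rw [ne_eq, decide_eq_decide]
  have := hD.iff_not_of_auxGraph_adj hO h
  tauto

end LocalTournament

section AuxColoring

variable {V : Type*} {G : SimpleGraph V}

def auxColoringOrientation (C : (auxGraph G).Coloring Bool) (u v : V) : Prop :=
  ∃ h : G.Adj u v, C ⟨(u, v), h⟩ = true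

variable (C : (auxGraph G).Coloring Bool)

theorem isOrientation_auxColoringOrientation : IsOrientation G (auxColoringOrientation C) := by
  have hswap {u v : V} (h : G.Adj u v) : C ⟨(u, v), h⟩ ≠ C ⟨(v, u), h.symm⟩ :=
    C.valid (auxGraph.adj_swap h)
  refine ⟨fun u v h => h.1, ?_, fun u v h => ?_⟩
  · rintro u v ⟨h, huv⟩ ⟨_, hvu⟩
    exact hswap h (huv.trans hvu.symm)
  · cases huv : C ⟨(u, v), h⟩
    · exact .inr ⟨h.symm, by simpa [huv] using (hswap h).symm⟩
    · exact .inl ⟨h, huv⟩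

theorem isLocalTournament_auxColoringOrientation :
    IsLocalTournament (auxColoringOrientation C) := by
  have htot := (isOrientation_auxColoringOrientation C).2.2
  refine ⟨(isOrientation_auxColoringOrientation C).2.1, ?_, ?_⟩
  · rintro v x y ⟨hx, cx⟩ ⟨hy, cy⟩ hxy
    by_cases hn : G.Adj x y
    · exact htot x y hn
    · exact absurd (cx.trans cy.symm) (C.valid (auxGraph.adj_of_fst_eq hx hy hxy hn))
  · rintro v x y ⟨hx, cx⟩ ⟨hy, cy⟩ hxy
    by_cases hn : G.Adj x y
    · exact htot x y hn
    · exact absurd (cx.trans cy.symm) (C.valid (auxGraph.adj_of_snd_eq hx hy hxy hn))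

end AuxColoring

theorem stmt_11_general {V : Type*} (G : SimpleGraph V) (A : V → V → Prop)
    (hsub : ∀ u v : V, A u v → G.Adj u v) :
    (∃ D : V → V → Prop, IsOrientation G D ∧ (∀ u v : V, A u v → D u v) ∧
        IsLocalTournament D) ↔
    ((auxGraph G).Colorable 2 ∧
      ∃ C : (auxGraph G).Coloring Bool,
        ∀ x : EdgePair G, A x.1.1 x.1.2 → C x = true) := by
  constructor
  · rintro ⟨D, hO, hAD, hD⟩
    obtain ⟨C, hC⟩ := hD.exists_auxGraph_coloring hO
    exact ⟨by simpa using C.colorable, C, fun x hx => (hC x).2 (hAD _ _ hx)⟩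
  · rintro ⟨-, C, hC⟩
    exact ⟨auxColoringOrientation C, isOrientation_auxColoringOrientation C,
      fun u v h => ⟨hsub u v h, hC ⟨(u, v), hsub u v h⟩ h⟩,
      isLocalTournament_auxColoringOrientation C⟩

/-- (The characterization behind the polynomial-time
algorithm.)  A partially oriented graph, with underlying graph `G` and arc
set `A`, can be completed to a local tournament iff the auxiliary graph
`G⁺` is bipartite and the vertices of `G⁺` corresponding to the arcs of
`A` are contained in a single colour class of `G⁺`. -/
theorem stmt_11 {V : Type*} [Fintype V] (G : SimpleGraph V) (A : V → V → Prop)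
    (hsub : ∀ u v : V, A u v → G.Adj u v)
    (hasym : IsOrientedGraph A) :
    (∃ D : V → V → Prop, IsOrientation G D ∧ (∀ u v : V, A u v → D u v) ∧
        IsLocalTournament D) ↔
    ((auxGraph G).Colorable 2 ∧
      ∃ C : (auxGraph G).Coloring Bool,
        ∀ x : EdgePair G, A x.1.1 x.1.2 → C x = true) :=
  stmt_11_general G A hsub
end
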